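/- Let G be a directed graph and let G' be the directed graph with vertex set {u₁, u₂ : u ∈ V(G)} and arc set {(u₁,v₁) : (u,v) ∈ A(G)} ∪ {(u₁,u₂) : u ∈ V(G)} (each vertex gets one fresh out-neighbour). Then for every vertex v of G, the normal-play outcome of Vertex Geography on (G,v) equals the misère-play outcome of Vertex Geography on (G',v₁): the first player wins (G,v) in normal play if and only if the first player wins (G',v₁) in misère play. -/
import Mathlib


universe u
mutual
  inductive GNormalWin {α : Type u} (moves : α → α → Prop) : α → Prop
    | step {p q : α} : moves p q → GNormalLose moves q → GNormalWin moves p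
  inductive GNormalLose {α : Type u} (moves : α → α → Prop) : α → Prop
    | intro {p : α} : (∀ q, moves p q → GNormalWin moves q) → GNormalLose moves p
end

mutual
  inductive GMisereWin {α : Type u} (moves : α → α → Prop) : α → Prop
    | terminal {p : α} : (∀ q, ¬ moves p q) → GMisereWin moves p
    | step {p q : α} : moves p q → GMisereLose moves q → GMisereWin moves p
  inductive GMisereLose {α : Type u} (moves : α → α → Prop) : α → Prop
    | intro {p q₀ : α} : moves p q₀ → (∀ q, moves p q → GMisereWin moves q) → GMisereLose moves p
end

def nimMove {V : Type u} (adj : V → V → Prop) (p q : V × (V → ℕ)) : Prop :=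
  adj p.1 q.1 ∧ q.2 p.1 < p.2 p.1 ∧ ∀ v, v ≠ p.1 → q.2 v = p.2 v

mutual
  inductive NimRMWin {V : Type u} (adj : V → V → Prop) : V × (V → ℕ) → Prop
    | zero {p} : p.2 p.1 = 0 → NimRMWin adj p
    | step {p q} : nimMove adj p q → NimRMLose adj q → NimRMWin adj p
  inductive NimRMLose {V : Type u} (adj : V → V → Prop) : V × (V → ℕ) → Prop
    | intro {p} : p.2 p.1 ≠ 0 → (∀ q, nimMove adj p q → NimRMWin adj q) → NimRMLose adj p
end

def vgMove {V : Type u} (A : V → V → Prop) (p q : Set V × V) : Prop :=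
  A p.2 q.2 ∧ q.2 ∈ p.1 ∧ q.2 ≠ p.2 ∧ q.1 = p.1 \ {p.2}

def addOut {V : Type u} (A : V → V → Prop) : V ⊕ V → V ⊕ V → Prop
  | .inl a, .inl b => A a b
  | .inl a, .inr b => a = b
  | _, _ => False

def MaxMatching {V : Type u} (G : SimpleGraph V) (M : G.Subgraph) : Prop :=
  M.IsMatching ∧ ∀ N : G.Subgraph, N.IsMatching → N.edgeSet.ncard ≤ M.edgeSet.ncard

namespace GeoAux

variable {V : Type} [Fintype V]

def F (S : Set V) : Set (V ⊕ V) := Sum.inl '' S ∪ Set.range Sum.inr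

lemma inl_mem_F {S : Set V} {w : V} : Sum.inl w ∈ F S ↔ w ∈ S := by
  simp [F]

lemma inr_mem_F {S : Set V} (b : V) : Sum.inr b ∈ F S := by simp [F]

lemma F_diff (S : Set V) (u : V) : F S \ {Sum.inl u} = F (S \ {u}) := by
  ext x; cases x <;> simp [F]

lemma F_univ : F (Set.univ : Set V) = Set.univ := by
  ext x; cases x <;> simp [F]

lemma no_move_inr (A : V → V → Prop) (T : Set (V ⊕ V)) (b : V) (q : Set (V ⊕ V) × (V ⊕ V)) :
    ¬ vgMove (addOut A) (T, Sum.inr b) q := by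
  rintro ⟨h1, -⟩
  obtain ⟨T', x⟩ := q
  cases x <;> exact h1

lemma no_misere_lose_inr (A : V → V → Prop) (T : Set (V ⊕ V)) (b : V) :
    ¬ GMisereLose (vgMove (addOut A)) (T, Sum.inr b) := by
  intro h
  cases h with
  | intro m _ => exact no_move_inr A T b _ m

lemma move_to_inr (A : V → V → Prop) (S : Set V) (u : V) :
    vgMove (addOut A) (F S, Sum.inl u) (F S \ {Sum.inl u}, Sum.inr u) :=
  ⟨rfl, inr_mem_F u, by simp, rfl⟩

lemma key (A : V → V → Prop) :
    ∀ (n : ℕ) (S : Set V) (u : V), S.ncard = n → u ∈ S →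
      ((GNormalWin (vgMove A) (S, u) ↔ GMisereWin (vgMove (addOut A)) (F S, Sum.inl u)) ∧
       (GNormalLose (vgMove A) (S, u) ↔ GMisereLose (vgMove (addOut A)) (F S, Sum.inl u))) := by
  intro n
  induction n using Nat.strong_induction_on with
  | _ n ih =>
    intro S u hn hu
    have hlt : (S \ {u}).ncard < n := by
      subst hn
      exact Set.ncard_diff_singleton_lt_of_mem hu S.toFinite
    constructor
    · constructor
      · intro h
        cases h with
        | step m hL =>
          rename_i q
          obtain ⟨T, w⟩ := q
          obtain ⟨hA, hmem, hne, hset⟩ := m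
          simp only at hA hmem hne hset
          subst hset
          refine GMisereWin.step (q := (F S \ {Sum.inl u}, Sum.inl w))
            ⟨hA, inl_mem_F.mpr hmem, by simpa using hne, rfl⟩ ?_
          rw [F_diff]
          exact ((ih _ hlt _ w rfl ⟨hmem, hne⟩).2).mp hL
      · intro h
        cases h with
        | terminal hterm => exact absurd (move_to_inr A S u) (hterm _)
        | step m hL =>
          rename_i q
          obtain ⟨T, x⟩ := q
          obtain ⟨hA, hmem, hne, hset⟩ := m
          simp only at hA hmem hne hset
          subst hset
          cases x with
          | inr b => exact absurd hL (no_misere_lose_inr A _ b)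
          | inl w =>
            have hwS : w ∈ S := inl_mem_F.mp hmem
            have hwu : w ≠ u := fun h => hne (congrArg Sum.inl h)
            rw [F_diff] at hL
            exact GNormalWin.step (q := (S \ {u}, w)) ⟨hA, hwS, hwu, rfl⟩
              (((ih _ hlt _ w rfl ⟨hwS, hwu⟩).2).mpr hL)
    · constructor
      · intro h
        cases h with
        | intro hall =>
          refine GMisereLose.intro (move_to_inr A S u) ?_
          rintro ⟨T, x⟩ ⟨hA, hmem, hne, hset⟩
          simp only at hA hmem hne hset
          subst hset
          cases x with
          | inr b => exact GMisereWin.terminal (fun q => no_move_inr A _ b q)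
          | inl w =>
            have hwS : w ∈ S := inl_mem_F.mp hmem
            have hwu : w ≠ u := fun h => hne (congrArg Sum.inl h)
            have := hall (S \ {u}, w) ⟨hA, hwS, hwu, rfl⟩
            rw [F_diff]
            exact ((ih _ hlt _ w rfl ⟨hwS, hwu⟩).1).mp this
      · intro h
        cases h with
        | intro m hall =>
          refine GNormalLose.intro ?_
          rintro ⟨T, w⟩ ⟨hA, hmem, hne, hset⟩
          simp only at hA hmem hne hset
          subst hset
          have := hall (F S \ {Sum.inl u}, Sum.inl w)
            ⟨hA, inl_mem_F.mpr hmem, by simpa using hne, rfl⟩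
          rw [F_diff] at this
          exact ((ih _ hlt _ w rfl ⟨hmem, hne⟩).1).mpr this

end GeoAux

/-- Directed Vertex Geography: the normal outcome of `(G,v)` equals the misère outcome of
`(G',v₁)` where `G'` gives every vertex a fresh out-neighbour. -/
theorem stmt2 {V : Type} [Fintype V] (A : V → V → Prop) (v : V) :
    GNormalWin (vgMove A) (Set.univ, v) ↔
      GMisereWin (vgMove (addOut A)) (Set.univ, Sum.inl v) := by
  have h := (GeoAux.key A Set.univ.ncard Set.univ v rfl (Set.mem_univ v)).1
  rwa [GeoAux.F_univ] at h
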